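/- Let X and Y be nontrivial real Banach spaces, let H be a closed linear subspace of L(X,Y) containing all finite rank operators, and let δ > 0. If the dual space X* is δ-rough, then H (with the induced operator norm) is δ-rough. -/

import Mathlib

open scoped BigOperators

/-- A Banach space `Z` is `δ`-average rough. -/
def IsAverageRough (Z : Type*) [NormedAddCommGroup Z] (δ : ℝ) : Prop :=
  ∀ n : ℕ, 0 < n → ∀ x : Fin n → Z, (∀ i, ‖x i‖ = 1) →
    ∀ ε > (0 : ℝ), ∀ η > (0 : ℝ), ∃ y : Z, 0 < ‖y‖ ∧ ‖y‖ < η ∧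
      (δ - ε) * ‖y‖ ≤ (1 / (n : ℝ)) * ∑ i, (‖x i + y‖ + ‖x i - y‖) - 2

/-- A Banach space `Z` is `δ`-rough. -/
def IsRough (Z : Type*) [NormedAddCommGroup Z] (δ : ℝ) : Prop :=
  ∀ x : Z, ‖x‖ = 1 →
    ∀ ε > (0 : ℝ), ∀ η > (0 : ℝ), ∃ y : Z, 0 < ‖y‖ ∧ ‖y‖ < η ∧
      (δ - ε) * ‖y‖ ≤ ‖x + y‖ + ‖x - y‖ - 2

/-- A Banach space `Z` is non-rough if it is `ε`-rough for no `ε > 0`. -/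
def NonRough (Z : Type*) [NormedAddCommGroup Z] : Prop :=
  ¬ ∃ ε > (0 : ℝ), IsRough Z ε

/-- A Banach space `Z` is octahedral. -/
def Octahedral (Z : Type*) [NormedAddCommGroup Z] : Prop :=
  ∀ (n : ℕ) (x : Fin n → Z), (∀ i, ‖x i‖ = 1) →
    ∀ ε > (0 : ℝ), ∃ y : Z, ‖y‖ = 1 ∧ ∀ i, 2 - ε ≤ ‖x i + y‖

/-- A Banach space `Z` is alternatively octahedral. -/
def AlternativelyOctahedral (Z : Type*) [NormedAddCommGroup Z] : Prop :=
  ∀ (n : ℕ) (x : Fin n → Z), (∀ i, ‖x i‖ = 1) →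
    ∀ ε > (0 : ℝ), ∃ y : Z, ‖y‖ = 1 ∧ ∀ i, 2 - ε ≤ max ‖x i + y‖ ‖x i - y‖

/-- A Banach space `X` is weakly `δ`-average rough: every non-empty relatively weak*
open subset of the closed unit ball of the dual has diameter at least `δ`. -/
def WeaklyAverageRough (X : Type*) [NormedAddCommGroup X] [NormedSpace ℝ X] (δ : ℝ) : Prop :=
  ∀ V : Set (WeakDual ℝ X), IsOpen V →
    ∀ U : Set (StrongDual ℝ X),
      U = {f : StrongDual ℝ X | ‖f‖ ≤ 1} ∩
            {f : StrongDual ℝ X | StrongDual.toWeakDual f ∈ V} →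
      U.Nonempty → δ ≤ Metric.diam U

/-! Let `g` be a norm-one functional with `g y = 1` such that `g ∘ T` almost attains `‖T‖ = 1`,
and let `u` be `g ∘ T` normalized. For `w ∈ X*` the rank-one operator `w ⊗ y` has norm `‖w‖`, and
`g ∘ (T ± w ⊗ y) = g ∘ T ± w`, so `‖T ± w ⊗ y‖ ≥ ‖u ± w‖ - (1 - ‖g ∘ T‖)`: roughness of `X*` at `u`
passes to `H` at `T`. The roughness of `X*` may be witnessed at any prescribed size `‖w‖ = t`,
because `τ ↦ ‖u + τ v‖ + ‖u - τ v‖ - 2` is convex and vanishes at `0`. -/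

theorem mul_norm_add_add_norm_sub_le {E : Type*} [SeminormedAddCommGroup E] [NormedSpace ℝ E]
    (u v : E) {c : ℝ} (hc : 1 ≤ c) :
    c * (‖u + v‖ + ‖u - v‖ - 2 * ‖u‖) ≤ ‖u + c • v‖ + ‖u - c • v‖ - 2 * ‖u‖ := by
  have key : ∀ w : E, c * ‖u + w‖ ≤ ‖u + c • w‖ + (c - 1) * ‖u‖ := fun w => by
    calc c * ‖u + w‖ = ‖c • (u + w)‖ := by rw [norm_smul, Real.norm_of_nonneg (by linarith)]
      _ = ‖(u + c • w) + (c - 1) • u‖ := by congr 1; module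
      _ ≤ ‖u + c • w‖ + (c - 1) * ‖u‖ := by
          refine (norm_add_le _ _).trans_eq ?_
          rw [norm_smul, Real.norm_of_nonneg (by linarith)]
  have h₁ := key v
  have h₂ := key (-v)
  simp only [smul_neg, ← sub_eq_add_neg] at h₂
  linarith

theorem IsRough.exists_norm_eq {Z : Type*} [NormedAddCommGroup Z] [NormedSpace ℝ Z] {δ : ℝ}
    (hZ : IsRough Z δ) {u : Z} (hu : ‖u‖ = 1) {ε t : ℝ} (hε : 0 < ε) (ht : 0 < t) :
    ∃ w : Z, ‖w‖ = t ∧ (δ - ε) * t ≤ ‖u + w‖ + ‖u - w‖ - 2 := by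
  obtain ⟨v, hv, hvt, hδv⟩ := hZ u hu ε hε t ht
  have hc : 1 ≤ t / ‖v‖ := (one_le_div hv).2 hvt.le
  refine ⟨(t / ‖v‖) • v, ?_, ?_⟩
  · rw [norm_smul, Real.norm_of_nonneg (by positivity), div_mul_cancel₀ _ hv.ne']
  · have hconvex := mul_norm_add_add_norm_sub_le u v hc
    rw [hu] at hconvex
    calc (δ - ε) * t = t / ‖v‖ * ((δ - ε) * ‖v‖) := by field_simp
      _ ≤ t / ‖v‖ * (‖u + v‖ + ‖u - v‖ - 2 * 1) := by
          rw [mul_one]; exact mul_le_mul_of_nonneg_left hδv (by positivity)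
      _ ≤ _ := by linarith

theorem ContinuousLinearMap.finiteDimensional_range_smulRight {𝕜 E F : Type*} [Field 𝕜]
    [TopologicalSpace 𝕜] [AddCommGroup E] [Module 𝕜 E] [TopologicalSpace E]
    [AddCommGroup F] [Module 𝕜 F] [TopologicalSpace F] [ContinuousSMul 𝕜 F]
    (f : E →L[𝕜] 𝕜) (y : F) :
    FiniteDimensional 𝕜 (LinearMap.range (f.smulRight y : E →ₗ[𝕜] F)) := by
  have hfactor : (f.smulRight y : E →ₗ[𝕜] F) =
      (LinearMap.toSpanSingleton 𝕜 F y).comp (f : E →ₗ[𝕜] 𝕜) := by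
    ext; simp
  rw [hfactor]
  exact Submodule.finiteDimensional_of_le (LinearMap.range_comp_le_range _ _)

theorem ContinuousLinearMap.comp_smulRight_of_apply_eq_one {𝕜 E F : Type*} [Semiring 𝕜]
    [TopologicalSpace 𝕜] [AddCommMonoid E] [Module 𝕜 E] [TopologicalSpace E]
    [AddCommMonoid F] [Module 𝕜 F] [TopologicalSpace F] [ContinuousSMul 𝕜 F]
    (g : F →L[𝕜] 𝕜) (w : E →L[𝕜] 𝕜) {y : F} (hgy : g y = 1) : g.comp (w.smulRight y) = w := by
  ext x
  simp [hgy]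

section DualComposition

variable {𝕜 E F : Type*} [RCLike 𝕜] [NormedAddCommGroup E] [NormedSpace 𝕜 E]
  [NormedAddCommGroup F] [NormedSpace 𝕜 F]

theorem ContinuousLinearMap.exists_dual_pair_lt_norm_comp (A : E →L[𝕜] F) {θ : ℝ}
    (hθ : 0 ≤ θ) (hA : θ < ‖A‖) :
    ∃ (g : StrongDual 𝕜 F) (y : F), ‖g‖ = 1 ∧ ‖y‖ = 1 ∧ g y = 1 ∧ θ < ‖g.comp A‖ := by
  obtain ⟨x, hx, hθx⟩ := A.exists_lt_apply_of_lt_opNorm hA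
  have hAx : 0 < ‖A x‖ := hθ.trans_lt hθx
  obtain ⟨g, hg, hgAx⟩ := exists_dual_vector 𝕜 (A x) hAx.ne'
  refine ⟨g, (‖A x‖⁻¹ : 𝕜) • A x, hg, ?_, ?_, ?_⟩
  · rw [norm_smul, norm_inv, RCLike.norm_ofReal, abs_norm, inv_mul_cancel₀ hAx.ne']
  · rw [map_smul, hgAx, smul_eq_mul, inv_mul_cancel₀ (by exact_mod_cast hAx.ne')]
  · calc θ < ‖A x‖ := hθx
      _ = ‖g (A x)‖ := by rw [hgAx, RCLike.norm_ofReal, abs_norm]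
      _ ≤ ‖g.comp A‖ * ‖x‖ := (g.comp A).le_opNorm x
      _ ≤ ‖g.comp A‖ := mul_le_of_le_one_right (norm_nonneg _) hx.le

theorem ContinuousLinearMap.norm_add_comp_le_norm_add_add_norm_sub_comp {g : StrongDual 𝕜 F}
    (hg : ‖g‖ ≤ 1) (u : StrongDual 𝕜 E) (A B : E →L[𝕜] F) :
    ‖u + g.comp B‖ ≤ ‖A + B‖ + ‖u - g.comp A‖ := by
  calc ‖u + g.comp B‖ ≤ ‖g.comp A + g.comp B‖ + ‖u + g.comp B - (g.comp A + g.comp B)‖ :=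
        norm_le_norm_add_norm_sub' _ _
    _ = ‖g.comp (A + B)‖ + ‖u - g.comp A‖ := by
        rw [add_sub_add_right_eq_sub, ContinuousLinearMap.comp_add]
    _ ≤ ‖A + B‖ + ‖u - g.comp A‖ := by
        gcongr
        exact (g.opNorm_comp_le _).trans (mul_le_of_le_one_left (norm_nonneg _) hg)

end DualComposition

theorem stmt2
    (X Y : Type*) [NormedAddCommGroup X] [NormedSpace ℝ X]
    [NormedAddCommGroup Y] [NormedSpace ℝ Y]
    (H : Submodule ℝ (X →L[ℝ] Y))
    (hHfin : ∀ T : X →L[ℝ] Y, FiniteDimensional ℝ (LinearMap.range (T : X →ₗ[ℝ] Y)) → T ∈ H)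
    (δ : ℝ)
    (hX : IsRough (StrongDual ℝ X) δ) :
    IsRough H δ := by
  intro T hT ε hε η hη
  set A : X →L[ℝ] Y := (T : X →L[ℝ] Y)
  obtain ⟨t, ht0, htη⟩ : ∃ t, 0 < t ∧ t < η := ⟨η / 2, half_pos hη, half_lt_self hη⟩
  obtain ⟨g, y, hg, hy, hgy, hs⟩ := A.exists_dual_pair_lt_norm_comp
    (le_max_left 0 (1 - ε * t / 4))
    (by rw [show ‖A‖ = 1 from hT, max_lt_iff]; exact ⟨one_pos, by linarith [mul_pos hε ht0]⟩)
  set s := ‖g.comp A‖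
  obtain ⟨hs0, hsε⟩ := max_lt_iff.1 hs
  have hs1 : s ≤ 1 := (g.opNorm_comp_le A).trans (by rw [hg, one_mul]; exact hT.le)
  set u : StrongDual ℝ X := s⁻¹ • g.comp A
  have hu : ‖u‖ = 1 := by
    rw [norm_smul, norm_inv, Real.norm_of_nonneg hs0.le, inv_mul_cancel₀ hs0.ne']
  have hsu : ‖u - g.comp A‖ = 1 - s := by
    have hAu : g.comp A = s • u := (smul_inv_smul₀ hs0.ne' _).symm
    rw [show u - g.comp A = (1 - s) • u by rw [hAu]; module,
      norm_smul, hu, mul_one, Real.norm_of_nonneg (by linarith)]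
  obtain ⟨w, hw, hδw⟩ := hX.exists_norm_eq hu (half_pos hε) ht0
  let S : H := ⟨w.smulRight y, hHfin _ (w.finiteDimensional_range_smulRight y)⟩
  have hS : ‖S‖ = t := by
    rw [Submodule.coe_norm, ContinuousLinearMap.norm_smulRight_apply, hw, hy, mul_one]
  have hplus := ContinuousLinearMap.norm_add_comp_le_norm_add_add_norm_sub_comp hg.le u A S
  have hminus := ContinuousLinearMap.norm_add_comp_le_norm_add_add_norm_sub_comp hg.le u A (-S)
  rw [ContinuousLinearMap.comp_neg, ← sub_eq_add_neg, ← sub_eq_add_neg] at hminus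
  simp only [S, ContinuousLinearMap.comp_smulRight_of_apply_eq_one g w hgy] at hplus hminus
  refine ⟨S, hS ▸ ht0, hS ▸ htη, ?_⟩
  change (δ - ε) * ‖S‖ ≤ ‖A + w.smulRight y‖ + ‖A - w.smulRight y‖ - 2
  rw [hS]
  linarith
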